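/- Let N be a finite simple and cosimple matroid with an exact k-separation (A, B). Let M be a finite simple and cosimple matroid with distinct elements e, f ∈ E(M) \ E(N) such that M \ e / f = N. If λ_{M/f}(A ∪ {e}) = k − 1 and λ_{M\e}(A ∪ {f}) = k − 1, then λ_M(A ∪ {e, f}) = k − 1. -/

import Mathlib

/-!
Write `r` for the rank function of `M` and `B = E(M) − (A ∪ {e, f})`. As `f` is a nonloop,
`r_{M/f}(X) = r(X ∪ {f}) − 1` for `X` avoiding `f`; as `e` is not a coloop, deleting `e` keeps
`r(M)`. Expanding the four connectivities this way, both
`λ_{M\e/f}(A) + λ_M(A ∪ {e, f})` and `λ_{M/f}(A ∪ {e}) + λ_{M\e}(A ∪ {f})` equal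
`r(A ∪ {f}) + r(B ∪ {f}) + r(A ∪ {e, f}) + r(B) − 2 r(M) − 1`,
and three of the four terms are `k − 1`.
-/

open Set

namespace SeymourDecomp

variable {α : Type*}

/-- The rank of a set `X` in a (finite) matroid `M`: the largest cardinality of an
independent subset of `X`. -/
noncomputable def rk (M : Matroid α) (X : Set α) : ℕ :=
  sSup {n | ∃ I, M.Indep I ∧ I ⊆ X ∧ I.ncard = n}

/-- The connectivity function `λ_M(X) = r(X) + r(E − X) − r(M)` (integer-valued). -/
noncomputable def lam (M : Matroid α) (X : Set α) : ℤ :=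
  (rk M X : ℤ) + (rk M (M.E \ X) : ℤ) - (rk M M.E : ℤ)

/-- A circuit: a minimal dependent set. -/
def IsCircuit (M : Matroid α) (C : Set α) : Prop :=
  M.Dep C ∧ ∀ D, D ⊂ C → M.Indep D

/-- A cocircuit: a circuit of the dual matroid. -/
def IsCocircuit (M : Matroid α) (C : Set α) : Prop :=
  IsCircuit M✶ C

/-- A loop: a one-element circuit. -/
def IsLoop (M : Matroid α) (e : α) : Prop := IsCircuit M {e}

/-- A coloop: a one-element cocircuit. -/
def IsColoop (M : Matroid α) (e : α) : Prop := IsCocircuit M {e}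

/-- A matroid is simple if it has no loops and no 2-element circuits,
i.e. every circuit has at least 3 elements. -/
def Simple (M : Matroid α) : Prop := ∀ C, IsCircuit M C → 3 ≤ C.ncard

/-- A matroid is cosimple if its dual is simple. -/
def Cosimple (M : Matroid α) : Prop := Simple M✶

/-- Deletion of a set of elements. -/
def delete (M : Matroid α) (D : Set α) : Matroid α := M.restrict (M.E \ D)

/-- Contraction of a set of elements: `M / C = (M✶ \ C)✶`. -/
def contract (M : Matroid α) (C : Set α) : Matroid α := (delete M✶ C)✶

/-- `N` is a minor of `M` if it is obtained from `M` by contracting a set and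
deleting a disjoint set. -/
def IsMinor (N M : Matroid α) : Prop :=
  ∃ C D : Set α, C ⊆ M.E ∧ D ⊆ M.E ∧ Disjoint C D ∧ N = delete (contract M C) D

/-- `(A, B)` is a `k`-separation of `M`. -/
def KSep (M : Matroid α) (k : ℕ) (A B : Set α) : Prop :=
  A ∪ B = M.E ∧ Disjoint A B ∧ k ≤ A.ncard ∧ k ≤ B.ncard ∧ lam M A ≤ (k : ℤ) - 1

/-- `(A, B)` is an exact `k`-separation of `M`. -/
def ExactKSep (M : Matroid α) (k : ℕ) (A B : Set α) : Prop :=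
  A ∪ B = M.E ∧ Disjoint A B ∧ k ≤ A.ncard ∧ k ≤ B.ncard ∧ lam M A = (k : ℤ) - 1

/-- For `n ≥ 2`, `M` is `n`-connected if it has no `k`-separation for `k ≤ n − 1`. -/
def NConnected (M : Matroid α) (n : ℕ) : Prop :=
  ∀ k, 1 ≤ k → k ≤ n - 1 → ∀ A B : Set α, ¬ KSep M k A B

/-- A triangle: a 3-element circuit. -/
def Triangle (M : Matroid α) (T : Set α) : Prop := IsCircuit M T ∧ T.ncard = 3

/-- A triad: a 3-element cocircuit. -/
def Triad (M : Matroid α) (T : Set α) : Prop := IsCocircuit M T ∧ T.ncard = 3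

/-- Two matroids on the same ground type are isomorphic if there is a bijection
between their ground sets preserving independence. -/
def Iso (M N : Matroid α) : Prop :=
  ∃ φ : α → α, Set.BijOn φ M.E N.E ∧ ∀ I, I ⊆ M.E → (M.Indep I ↔ N.Indep (φ '' I))

/-- A class of matroids closed under minors. -/
def MinorClosed (𝓜 : Set (Matroid α)) : Prop :=
  ∀ M ∈ 𝓜, ∀ N : Matroid α, IsMinor N M → N ∈ 𝓜

/-- A class of matroids closed under isomorphism. -/
def IsoClosed (𝓜 : Set (Matroid α)) : Prop :=
  ∀ M ∈ 𝓜, ∀ N : Matroid α, Iso M N → N ∈ 𝓜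

open Matroid

section

variable {M : Matroid α} {A C X I : Set α} {e f : α}

lemma isCircuit_iff_matroid_isCircuit : IsCircuit M C ↔ M.IsCircuit C := by
  rw [isCircuit_iff_forall_ssubset]
  exact and_congr_right fun _ ↦ ⟨fun h I hI ↦ h I hI, fun h I hI ↦ h hI⟩

lemma Simple.isNonloop (hM : Simple M) (he : e ∈ M.E) : M.IsNonloop e := by
  by_contra hloop
  have hC : IsCircuit M {e} :=
    isCircuit_iff_matroid_isCircuit.2 (singleton_isCircuit.2 ((not_isNonloop_iff he).1 hloop))
  simpa using hM _ hC

lemma rk_eq_ncard_of_isBasis' [M.RankFinite] (hI : M.IsBasis' I X) : rk M X = I.ncard := by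
  refine IsGreatest.csSup_eq ⟨⟨I, hI.indep, hI.subset, rfl⟩, ?_⟩
  rintro _ ⟨J, hJ, hJX, rfl⟩
  obtain ⟨I', hI', hJI'⟩ := hJ.subset_isBasis'_of_subset hJX
  calc J.ncard ≤ I'.ncard := ncard_le_ncard hJI' hI'.indep.finite
    _ = I.ncard := by rw [ncard_def, ncard_def, hI'.encard_eq_encard hI]

lemma rk_restrict (M : Matroid α) (R X : Set α) : rk (M ↾ R) X = rk M (X ∩ R) := by
  unfold rk
  congr 1
  ext n
  simp only [restrict_indep_iff, subset_inter_iff, mem_ofPred_eq]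
  exact ⟨fun ⟨I, ⟨hI, hIR⟩, hIX, hn⟩ ↦ ⟨I, hI, ⟨hIX, hIR⟩, hn⟩,
    fun ⟨I, hI, ⟨hIX, hIR⟩, hn⟩ ↦ ⟨I, ⟨hI, hIR⟩, hIX, hn⟩⟩

lemma rk_delete {D : Set α} (hX : X ⊆ M.E \ D) : rk (delete M D) X = rk M X := by
  rw [delete, rk_restrict, inter_eq_self_of_subset_left hX]

lemma rk_diff_singleton_of_not_isColoop [M.RankFinite] (he : ¬ M.IsColoop e) :
    rk M (M.E \ {e}) = rk M M.E := by
  obtain ⟨B, hB, heB⟩ : ∃ B, M.IsBase B ∧ e ∉ B := by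
    simpa [isColoop_iff_forall_mem_isBase] using he
  rw [rk_eq_ncard_of_isBasis' hB.isBasis_ground.isBasis',
    rk_eq_ncard_of_isBasis' (hB.isBasis_of_subset sdiff_subset
      (subset_sdiff_singleton hB.subset_ground heB)).isBasis']

lemma rk_contract_singleton_add_one [M.RankFinite] (hf : M.IsNonloop f) (hX : X ⊆ M.E \ {f}) :
    rk (contract M {f}) X + 1 = rk M (insert f X) := by
  have hXE : X ⊆ (M ／ {f}).E := hX
  obtain ⟨J, hJ⟩ := (M ／ {f}).exists_isBasis X hXE
  have hfJ : f ∉ J := fun h ↦ (hX (hJ.subset h)).2 rfl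
  have hJf := hf.indep.union_isBasis_union_of_contract_isBasis hJ
  rw [union_singleton, union_singleton] at hJf
  rw [show contract M {f} = M ／ {f} from rfl, rk_eq_ncard_of_isBasis' hJ.isBasis',
    rk_eq_ncard_of_isBasis' hJf.isBasis', ncard_insert_of_notMem hfJ hJ.indep.finite]

lemma lam_delete_singleton [M.RankFinite] (he : ¬ M.IsColoop e) (hX : X ⊆ M.E \ {e}) :
    lam (delete M {e}) X = rk M X + rk M ((M.E \ {e}) \ X) - rk M M.E := by
  rw [lam, show (delete M {e}).E = M.E \ {e} from rfl, rk_delete hX, rk_delete sdiff_subset,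
    rk_delete subset_rfl, rk_diff_singleton_of_not_isColoop he]

lemma lam_contract_singleton [M.RankFinite] (hf : M.IsNonloop f) (hX : X ⊆ M.E \ {f}) :
    lam (contract M {f}) X = rk M (insert f X) + rk M (M.E \ X) - rk M M.E - 1 := by
  have hfX : f ∉ X := fun h ↦ (hX h).2 rfl
  have hcompl : insert f ((M.E \ {f}) \ X) = M.E \ X := by
    ext x
    by_cases hxf : x = f
    · subst hxf; simp [hf.mem_ground, hfX]
    · simp [hxf]
  have hX' := rk_contract_singleton_add_one hf hX
  have hcompl' := rk_contract_singleton_add_one hf (X := (M.E \ {f}) \ X) sdiff_subset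
  have hground := rk_contract_singleton_add_one hf (X := M.E \ {f}) subset_rfl
  rw [hcompl] at hcompl'
  rw [insert_sdiff_singleton, insert_eq_of_mem hf.mem_ground] at hground
  rw [lam, show (contract M {f}).E = M.E \ {f} from rfl]
  omega

lemma lam_contract_delete_add_lam_union_pair [M.RankFinite] (he : M✶.IsNonloop e)
    (hf : M.IsNonloop f) (hef : e ≠ f) (hA : A ⊆ (M.E \ {e}) \ {f}) :
    lam (contract (delete M {e}) {f}) A + lam M (A ∪ {e, f}) =
      lam (contract M {f}) (A ∪ {e}) + lam (delete M {e}) (A ∪ {f}) := by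
  have hfe : (delete M {e}).IsNonloop f := delete_isNonloop_iff.2 ⟨hf, hef.symm⟩
  have : (delete M {e}).RankFinite := inferInstanceAs (M ＼ {e}).RankFinite
  have hAe : A ∪ {e} ⊆ M.E \ {f} := by
    rintro x (hx | rfl)
    exacts [⟨(hA hx).1.1, (hA hx).2⟩, ⟨he.mem_ground, hef⟩]
  have hAf : A ∪ {f} ⊆ M.E \ {e} := by
    rintro x (hx | rfl)
    exacts [(hA hx).1, ⟨hf.mem_ground, hef.symm⟩]
  rw [lam_contract_singleton hfe hA, lam_contract_singleton hf hAe,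
    lam_delete_singleton he.not_isLoop hAf, show (delete M {e}).E = M.E \ {e} from rfl, lam]
  have hinsert : insert f (A ∪ {e}) = A ∪ {e, f} := by
    ext; simp only [mem_insert_iff, mem_union, mem_singleton_iff]; tauto
  have hcompl : (M.E \ {e}) \ (A ∪ {f}) = M.E \ (A ∪ {e, f}) := by
    ext; simp only [mem_sdiff, mem_union, mem_insert_iff, mem_singleton_iff]; tauto
  rw [← union_singleton, rk_delete hAf, rk_delete sdiff_subset, rk_delete subset_rfl,
    rk_diff_singleton_of_not_isColoop he.not_isLoop, sdiff_sdiff, union_comm {e}, hinsert, hcompl]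
  ring

end

theorem lam_union_pair_eq_of_contract_delete_general
    (N : Matroid α)
    (k : ℕ) (A B : Set α) (hsep : ExactKSep N k A B)
    (M : Matroid α) (hMfin : M.Finite) (hMsimple : Simple M) (hMcosimple : Cosimple M)
    (e f : α) (hef : e ≠ f) (he : e ∈ M.E \ N.E) (hf : f ∈ M.E \ N.E)
    (hN : contract (delete M {e}) {f} = N)
    (h1 : lam (contract M {f}) (A ∪ {e}) = (k : ℤ) - 1)
    (h2 : lam (delete M {e}) (A ∪ {f}) = (k : ℤ) - 1) :
    lam M (A ∪ ({e, f} : Set α)) = (k : ℤ) - 1 := by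
  have hA : A ⊆ (contract (delete M {e}) {f}).E := hN ▸ subset_union_left.trans hsep.1.subset
  have key := lam_contract_delete_add_lam_union_pair (Simple.isNonloop hMcosimple he.1)
    (hMsimple.isNonloop hf.1) hef hA
  rw [hN, hsep.2.2.2.2, h1, h2] at key
  linarith

/-- **Lemma 4.3(ii)**. If `M \ e / f = N`, `λ_{M/f}(A ∪ {e}) = k − 1` and
`λ_{M\e}(A ∪ {f}) = k − 1`, then `λ_M(A ∪ {e, f}) = k − 1`. -/
theorem lam_union_pair_eq_of_contract_delete
    (N : Matroid α) (hNfin : N.Finite) (hNsimple : Simple N) (hNcosimple : Cosimple N)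
    (k : ℕ) (hk : 1 ≤ k) (A B : Set α) (hsep : ExactKSep N k A B)
    (M : Matroid α) (hMfin : M.Finite) (hMsimple : Simple M) (hMcosimple : Cosimple M)
    (e f : α) (hef : e ≠ f) (he : e ∈ M.E \ N.E) (hf : f ∈ M.E \ N.E)
    (hN : contract (delete M {e}) {f} = N)
    (h1 : lam (contract M {f}) (A ∪ {e}) = (k : ℤ) - 1)
    (h2 : lam (delete M {e}) (A ∪ {f}) = (k : ℤ) - 1) :
    lam M (A ∪ ({e, f} : Set α)) = (k : ℤ) - 1 :=
  lam_union_pair_eq_of_contract_delete_general N k A B hsep M hMfin hMsimple hMcosimple e f hef he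
    hf hN h1 h2

end SeymourDecomp
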